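/- Let G be a free group with basis g₁, …, g_n, let H be a free group, let φ, ψ : G → H be homomorphisms, and let u, v ∈ H be distinct. If the homomorphism φ ∗ ψ ∗ u ∗ v : G ∗ G ∗ ⟨x⟩ ∗ ⟨y⟩ → H (sending the generators of the first free factor via φ, those of the second via ψ, and x ↦ u, y ↦ v) has remnant, then u and v are in different doubly-twisted conjugacy classes: there is no g ∈ G with v = φ(g) u ψ(g)⁻¹. -/

import Mathlib

/-! Basic definitions: cancellation in products of reduced words, remnant
of a homomorphism of free groups, and assorted constructions. -/

open FreeGroup

/-- `bpow w e` is `w` if `e = true` (exponent `+1`) and `w⁻¹` if `e = false`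
(exponent `-1`). -/
def bpow {β : Type*} (w : FreeGroup β) (e : Bool) : FreeGroup β := if e then w else w⁻¹

/-- The number of letters cancelled between `a` and `b` when the product `a * b`
is brought to reduced form: `(|a| + |b| - |a * b|) / 2`. -/
def cancel {β : Type*} [DecidableEq β] (a b : FreeGroup β) : ℕ :=
  (FreeGroup.norm a + FreeGroup.norm b - FreeGroup.norm (a * b)) / 2

/-- The maximal number of letters of the reduced word `η(gᵢ)` cancelled on its left
in a product `η(gⱼ)^ε * η(gᵢ)`, over all `j` and `ε = ±1` except `j = i, ε = -1`. -/
def maxLeftCancel {α β : Type*} [Fintype α] [DecidableEq α] [DecidableEq β]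
    (η : FreeGroup α →* FreeGroup β) (i : α) : ℕ :=
  (Finset.univ.filter fun je : α × Bool => je ≠ (i, false)).sup
    fun je => cancel (bpow (η (FreeGroup.of je.1)) je.2) (η (FreeGroup.of i))

/-- The maximal number of letters of the reduced word `η(gᵢ)` cancelled on its right
in a product `η(gᵢ) * η(gⱼ)^ε`, over all `j` and `ε = ±1` except `j = i, ε = -1`. -/
def maxRightCancel {α β : Type*} [Fintype α] [DecidableEq α] [DecidableEq β]
    (η : FreeGroup α →* FreeGroup β) (i : α) : ℕ :=
  (Finset.univ.filter fun je : α × Bool => je ≠ (i, false)).sup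
    fun je => cancel (η (FreeGroup.of i)) (bpow (η (FreeGroup.of je.1)) je.2)

/-- `η` has remnant: for each generator `gᵢ`, the maximal left cancellation plus the
maximal right cancellation is strictly less than the length of `η(gᵢ)`, so a nonempty
middle subword (the remnant `Rem_η(gᵢ)`) always survives. -/
def HasRemnant {α β : Type*} [Fintype α] [DecidableEq α] [DecidableEq β]
    (η : FreeGroup α →* FreeGroup β) : Prop :=
  ∀ i : α, maxLeftCancel η i + maxRightCancel η i < FreeGroup.norm (η (FreeGroup.of i))

/-- The length `|Rem_η(gᵢ)|` of the remnant word of `gᵢ`: the part of `η(gᵢ)` surviving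
all maximal cancellations. -/
def remnantLength {α β : Type*} [Fintype α] [DecidableEq α] [DecidableEq β]
    (η : FreeGroup α →* FreeGroup β) (i : α) : ℕ :=
  FreeGroup.norm (η (FreeGroup.of i)) - maxLeftCancel η i - maxRightCancel η i

/-- The remnant `Rem_η(gᵢ)` occupies positions `[maxLeftCancel η i, |η(gᵢ)| - maxRightCancel η i)`
of the reduced word `η(gᵢ)`.  It does not fully cancel in the reduced form of the product
`η(gᵢ) * w` iff the number of letters cancelled from the right end of `η(gᵢ)`, namely
`cancel (η(gᵢ)) w`, leaves some remnant letter alive. -/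
def remnantSurvivesRightMul {α β : Type*} [Fintype α] [DecidableEq α] [DecidableEq β]
    (η : FreeGroup α →* FreeGroup β) (i : α) (w : FreeGroup β) : Prop :=
  cancel (η (FreeGroup.of i)) w + maxLeftCancel η i < FreeGroup.norm (η (FreeGroup.of i))

/-- The remnant `Rem_η(gᵢ)` does not fully cancel in the reduced form of the
product `w * η(gᵢ)`. -/
def remnantSurvivesLeftMul {α β : Type*} [Fintype α] [DecidableEq α] [DecidableEq β]
    (η : FreeGroup α →* FreeGroup β) (i : α) (w : FreeGroup β) : Prop :=
  cancel w (η (FreeGroup.of i)) + maxRightCancel η i < FreeGroup.norm (η (FreeGroup.of i))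

/-- The homomorphism `φ ∗ ψ : G ∗ G → H` on the free product `G ∗ G`, realized as the
free group on `α ⊕ α`, sending the generators of the first factor via `φ` and those of
the second factor via `ψ`. -/
def prodHom {α β : Type*} (φ ψ : FreeGroup α →* FreeGroup β) :
    FreeGroup (α ⊕ α) →* FreeGroup β :=
  FreeGroup.lift (Sum.elim (fun i => φ (FreeGroup.of i)) (fun i => ψ (FreeGroup.of i)))

/-- `φ^v : g ↦ v⁻¹ φ(g) v`. -/
def conjHom {G H : Type*} [Group G] [Group H] (φ : G →* H) (v : H) : G →* H :=
  ((MulAut.conj v⁻¹).toMonoidHom).comp φ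

/-- The equalizer subgroup `Eq(φ, ψ) = {g : φ g = ψ g}`. -/
def eqSubgroup {G H : Type*} [Group G] [Group H] (φ ψ : G →* H) : Subgroup G where
  carrier := {g | φ g = ψ g}
  one_mem' := by simp
  mul_mem' := by
    intro a b ha hb
    simp only [Set.mem_setOf_eq] at *
    rw [_root_.map_mul, _root_.map_mul, ha, hb]
  inv_mem' := by
    intro a ha
    simp only [Set.mem_setOf_eq] at *
    rw [_root_.map_inv, _root_.map_inv, ha]

/-- The homomorphism `φ ∗ ψ ∗ u ∗ v : G ∗ G ∗ ⟨x⟩ ∗ ⟨y⟩ → H`, where the domain is the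
free group on `α ⊕ α ⊕ Unit ⊕ Unit`, sending the generators of the first factor via
`φ`, those of the second via `ψ`, and `x ↦ u`, `y ↦ v`. -/
def quadHom {α β : Type*} (φ ψ : FreeGroup α →* FreeGroup β) (u v : FreeGroup β) :
    FreeGroup (α ⊕ α ⊕ Unit ⊕ Unit) →* FreeGroup β :=
  FreeGroup.lift (Sum.elim (fun i => φ (FreeGroup.of i))
    (Sum.elim (fun i => ψ (FreeGroup.of i))
      (Sum.elim (fun _ => u) (fun _ => v))))

/-! Let `η` have remnant. By induction along a reduced word `w` ending in a letter `s`, the reduced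
form of `η(w)` ends with `η(s)` shortened on the left by at most the maximal left cancellation of
`s`: when a next letter `t` is appended, the cancellation between `η(w)` and `η(t)` is bounded by
the maximal right cancellation of `s`, which by the remnant condition stays inside what is left of
`η(s)`, so it is the cancellation between `η(s)` and `η(t)`. Hence `η` maps nontrivial words to
nontrivial elements and is injective.

If `v = φ(g) u ψ(g)⁻¹`, then `y` and `g x g'⁻¹`, with `g'` the copy of `g` in the second factor,
have the same image under the injective `φ ∗ ψ ∗ u ∗ v`; but only one of them involves `y`. -/

namespace FreeGroup

variable {α : Type*}

lemma invRev_drop (L : List (α × Bool)) (k : ℕ) :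
    (invRev L).drop k = invRev (L.take (L.length - k)) := by
  simp only [invRev, List.drop_reverse, List.length_map, List.map_take]

lemma lift_map_apply {γ G : Type*} [Group G] (f : γ → G) (e : α → γ) (w : FreeGroup α) :
    lift f (map e w) = lift (f ∘ e) w := by
  induction w using FreeGroup.induction_on <;> simp_all

variable [DecidableEq α]

lemma IsReduced.exists_reduce_append {A B : List (α × Bool)} (hA : IsReduced A)
    (hB : IsReduced B) :
    ∃ d ≤ A.length, d ≤ B.length ∧
      reduce (A ++ B) = A.take (A.length - d) ++ B.drop d ∧
      A.drop (A.length - d) = invRev (B.take d) := by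
  induction A using List.reverseRecOn generalizing B with
  | nil => exact ⟨0, by simp [hB.reduce_eq, invRev]⟩
  | append_singleton A a ih =>
    cases B with
    | nil => exact ⟨0, by simp [hA.reduce_eq, invRev]⟩
    | cons b B =>
      by_cases hab : a.1 = b.1 → a.2 = b.2
      · refine ⟨0, by simp, by simp, ?_, by simp [invRev]⟩
        rw [Nat.sub_zero, List.take_length, List.drop_zero]
        exact (hA.append_overlap (L₃ := b :: B)
          (isReduced_cons_cons.2 ⟨hab, hB⟩) (List.cons_ne_nil a [])).reduce_eq
      · have ha : a = (b.1, !b.2) := by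
          rw [Classical.not_imp] at hab
          exact Prod.ext hab.1 (Bool.eq_not.mpr hab.2)
        obtain ⟨d, hdA, hdB, hred, hdrop⟩ :=
          ih (hA.infix (List.prefix_append _ _).isInfix) (hB.infix (List.suffix_cons _ _).isInfix)
        have hstep : Red.Step (A ++ [a] ++ b :: B) (A ++ B) := by
          simpa [ha] using Red.Step.not (L₁ := A) (L₂ := B) (x := b.1) (b := !b.2)
        have hlen : (A ++ [a]).length - (d + 1) = A.length - d := by simp
        refine ⟨d + 1, by simp; omega, by simp; omega, ?_, ?_⟩
        · rw [reduce.Step.eq hstep, hred, hlen, List.take_append_of_le_length (by omega),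
            List.drop_succ_cons]
        · rw [hlen, List.drop_append_of_le_length (by omega), hdrop, List.take_succ_cons,
            invRev_cons, ha]
          simp [invRev]

end FreeGroup

section Cancel

variable {β : Type*} [DecidableEq β]

lemma cancel_spec (a b : FreeGroup β) :
    cancel a b ≤ a.norm ∧ cancel a b ≤ b.norm ∧
      (a * b).toWord = a.toWord.take (a.norm - cancel a b) ++ b.toWord.drop (cancel a b) ∧
      a.toWord.drop (a.norm - cancel a b) = invRev (b.toWord.take (cancel a b)) := by
  obtain ⟨d, hda, hdb, hmul, hdrop⟩ := (isReduced_toWord (x := a)).exists_reduce_append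
    (isReduced_toWord (x := b))
  rw [← toWord_mul] at hmul
  have hd : cancel a b = d := by
    have : (a * b).toWord.length = (a.toWord.length - d) + (b.toWord.length - d) := by
      simp only [hmul, List.length_append, List.length_take, List.length_drop]
      omega
    unfold cancel FreeGroup.norm
    omega
  subst hd
  exact ⟨hda, hdb, hmul, hdrop⟩

lemma le_cancel_of_drop_eq_invRev_take {a b : FreeGroup β} {t : ℕ} (hta : t ≤ a.norm)
    (htb : t ≤ b.norm) (h : a.toWord.drop (a.norm - t) = invRev (b.toWord.take t)) :
    t ≤ cancel a b := by
  have hab : a * b = mk (a.toWord.take (a.norm - t)) * mk (b.toWord.drop t) := by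
    conv_lhs => rw [← mk_toWord (x := a), ← mk_toWord (x := b),
      ← List.take_append_drop (a.norm - t) a.toWord, ← List.take_append_drop t b.toWord,
      ← mul_mk, ← mul_mk, h, ← inv_mk]
    group
  have : (a * b).norm ≤ (a.norm - t) + (b.norm - t) := by
    rw [hab]
    refine (FreeGroup.norm_mul_le _ _).trans
      (add_le_add (norm_mk_le.trans ?_) (norm_mk_le.trans ?_)) <;> simp [FreeGroup.norm]
  unfold cancel
  omega

lemma cancel_inv_inv (a b : FreeGroup β) : cancel b⁻¹ a⁻¹ = cancel a b := by
  simp only [cancel, ← mul_inv_rev, norm_inv_eq, Nat.add_comm]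

lemma cancel_le_of_toWord_eq_append_drop {a w b : FreeGroup β} {T : List (β × Bool)} {c : ℕ}
    (ha : a.toWord = T ++ w.toWord.drop c) (hlt : c + cancel w b < w.norm) :
    cancel a b ≤ cancel w b := by
  obtain ⟨hda, hdb, -, hdrop⟩ := cancel_spec a b
  have hlen : a.norm = T.length + (w.norm - c) := by simp [FreeGroup.norm, ha]
  set t := min (cancel a b) (w.norm - c) with ht
  have hsuffix : a.toWord.drop (a.norm - t) = w.toWord.drop (w.norm - t) := by
    rw [ha, show a.norm - t = T.length + (w.norm - c - t) by omega, List.drop_length_add_append,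
      List.drop_drop]
    congr 1
    omega
  have hinv : a.toWord.drop (a.norm - t) = invRev (b.toWord.take t) := by
    rw [show a.norm - t = (a.norm - cancel a b) + (cancel a b - t) by omega, ← List.drop_drop,
      hdrop, invRev_drop, List.length_take, List.take_take]
    congr 2
    simp only [FreeGroup.norm] at hdb
    omega
  have : t ≤ cancel w b :=
    le_cancel_of_drop_eq_invRev_take (by omega) (by omega) (hsuffix ▸ hinv)
  omega

end Cancel

section Letters

variable {α β : Type*} (η : FreeGroup α →* FreeGroup β)

def letterImage (x : α × Bool) : FreeGroup β := bpow (η (of x.1)) x.2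

lemma letterImage_inv (x : α × Bool) : letterImage η (x.1, !x.2) = (letterImage η x)⁻¹ := by
  rcases x with ⟨i, _ | _⟩ <;> simp [letterImage, bpow]

lemma map_mk_singleton (x : α × Bool) : η (mk [x]) = letterImage η x := by
  rcases x with ⟨i, _ | _⟩
  · change η (mk [(i, false)]) = (η (of i))⁻¹
    rw [← _root_.map_inv, of, inv_mk]
    rfl
  · rfl

variable [DecidableEq β]

lemma norm_letterImage (x : α × Bool) : (letterImage η x).norm = (η (of x.1)).norm := by
  rcases x with ⟨i, _ | _⟩ <;> simp [letterImage, bpow, norm_inv_eq]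

variable [Fintype α] [DecidableEq α]

/-- The letter `(i, false)` stands for `gᵢ⁻¹`, whose image has the right end of `η(gᵢ)` on its
left. -/
def leftCancelBound (x : α × Bool) : ℕ :=
  if x.2 then maxLeftCancel η x.1 else maxRightCancel η x.1

def rightCancelBound (x : α × Bool) : ℕ := leftCancelBound η (x.1, !x.2)

variable {η} in
lemma HasRemnant.leftCancelBound_add_rightCancelBound_lt (h : HasRemnant η) (x : α × Bool) :
    leftCancelBound η x + rightCancelBound η x < (η (of x.1)).norm := by
  rcases x with ⟨i, _ | _⟩ <;> simp [rightCancelBound, leftCancelBound] <;> grind [HasRemnant]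

lemma cancel_letterImage_le_leftCancelBound {x y : α × Bool} (hxy : x.1 = y.1 → x.2 = y.2) :
    cancel (letterImage η x) (letterImage η y) ≤ leftCancelBound η y := by
  rcases y with ⟨j, _ | _⟩
  · change cancel _ (η (of j))⁻¹ ≤ maxRightCancel η j
    rw [← cancel_inv_inv, inv_inv, ← letterImage_inv]
    refine Finset.le_sup (f := fun je : α × Bool => cancel (η (of j)) (letterImage η je)) ?_
    simp only [Finset.mem_filter, Finset.mem_univ, true_and, ne_eq, Prod.mk.injEq]
    grind
  · refine Finset.le_sup (f := fun je : α × Bool => cancel (letterImage η je) (η (of j))) ?_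
    simp only [Finset.mem_filter, Finset.mem_univ, true_and, ne_eq]
    grind

lemma cancel_letterImage_le_rightCancelBound {x y : α × Bool} (hxy : x.1 = y.1 → x.2 = y.2) :
    cancel (letterImage η x) (letterImage η y) ≤ rightCancelBound η x := by
  rw [← cancel_inv_inv, ← letterImage_inv, ← letterImage_inv]
  exact cancel_letterImage_le_leftCancelBound η (by simpa [eq_comm] using hxy)

end Letters

section Injective

variable {α β : Type*} [Fintype α] [DecidableEq α] [DecidableEq β]
  {η : FreeGroup α →* FreeGroup β}

lemma HasRemnant.exists_toWord_map_mk_append_singleton (h : HasRemnant η) {L : List (α × Bool)}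
    {x : α × Bool} (hL : IsReduced (L ++ [x])) :
    ∃ c ≤ leftCancelBound η x, ∃ T,
      (η (mk (L ++ [x]))).toWord = T ++ (letterImage η x).toWord.drop c := by
  induction L using List.reverseRecOn generalizing x with
  | nil => exact ⟨0, Nat.zero_le _, [], by simp [map_mk_singleton]⟩
  | append_singleton L y ih =>
    obtain ⟨c, hc, T, hT⟩ := ih (hL.infix (List.prefix_append _ _).isInfix)
    have hyx : y.1 = x.1 → y.2 = x.2 :=
      (isReduced_cons_cons.1 (hL.infix ⟨L, [], by simp⟩ : IsReduced [y, x])).1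
    have hle : cancel (η (mk (L ++ [y]))) (letterImage η x)
        ≤ cancel (letterImage η y) (letterImage η x) := by
      refine cancel_le_of_toWord_eq_append_drop hT ?_
      have := h.leftCancelBound_add_rightCancelBound_lt y
      have := cancel_letterImage_le_rightCancelBound η hyx
      rw [norm_letterImage]
      omega
    obtain ⟨-, -, hword, -⟩ := cancel_spec (η (mk (L ++ [y]))) (letterImage η x)
    have hmul : η (mk (L ++ [y] ++ [x])) = η (mk (L ++ [y])) * letterImage η x := by
      rw [← mul_mk, _root_.map_mul, map_mk_singleton]
    exact ⟨_, hle.trans (cancel_letterImage_le_leftCancelBound η hyx), _, hmul ▸ hword⟩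

theorem HasRemnant.injective (h : HasRemnant η) : Function.Injective η := by
  refine (injective_iff_map_eq_one η).2 fun w hw => ?_
  obtain hnil | ⟨L, x, hL⟩ := w.toWord.eq_nil_or_concat
  · exact toWord_eq_nil_iff.1 hnil
  rw [List.concat_eq_append] at hL
  obtain ⟨c, hc, T, hT⟩ := h.exists_toWord_map_mk_append_singleton (hL ▸ isReduced_toWord)
  rw [← hL, mk_toWord, hw, toWord_one] at hT
  have hlen := congrArg List.length hT
  have := h.leftCancelBound_add_rightCancelBound_lt x
  rw [← norm_letterImage η x] at this
  simp only [List.length_nil, List.length_append, List.length_drop] at hlen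
  change _ = _ + ((letterImage η x).norm - c) at hlen
  omega

end Injective

section Quad

variable {α β : Type*} (φ ψ : FreeGroup α →* FreeGroup β) (u v : FreeGroup β)

lemma quadHom_map_inl (g : FreeGroup α) : quadHom φ ψ u v (map Sum.inl g) = φ g := by
  rw [quadHom, lift_map_apply]
  exact (lift_unique φ fun _ => rfl).symm

lemma quadHom_map_inr_inl (g : FreeGroup α) :
    quadHom φ ψ u v (map (Sum.inr ∘ Sum.inl) g) = ψ g := by
  rw [quadHom, lift_map_apply]
  exact (lift_unique ψ fun _ => rfl).symm

end Quad

theorem classes_distinct_of_quad_hasRemnant_general {n : ℕ} {β : Type*} [DecidableEq β]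
    (φ ψ : FreeGroup (Fin n) →* FreeGroup β) (u v : FreeGroup β)
    (h : HasRemnant (quadHom φ ψ u v)) :
    ¬ ∃ g : FreeGroup (Fin n), v = φ g * u * (ψ g)⁻¹ := by
  rintro ⟨g, hg⟩
  let x : FreeGroup (Fin n ⊕ Fin n ⊕ Unit ⊕ Unit) := of (Sum.inr (Sum.inr (Sum.inl ())))
  let y : FreeGroup (Fin n ⊕ Fin n ⊕ Unit ⊕ Unit) := of (Sum.inr (Sum.inr (Sum.inr ())))
  have hy : y = map Sum.inl g * x * (map (Sum.inr ∘ Sum.inl) g)⁻¹ :=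
    h.injective (by
      rw [_root_.map_mul, _root_.map_mul, _root_.map_inv, quadHom_map_inl, quadHom_map_inr_inl]
      simpa [x, y, quadHom] using hg)
  let yExponent : FreeGroup (Fin n ⊕ Fin n ⊕ Unit ⊕ Unit) →* FreeGroup Unit :=
    lift (Sum.elim 1 (Sum.elim 1 (Sum.elim 1 of)))
  have : (of () : FreeGroup Unit) = 1 := by
    simpa [x, y, yExponent, lift_map_apply, Function.comp_def] using congrArg yExponent hy
  exact of_ne_one () this

/-- If `u ≠ v` and `φ ∗ ψ ∗ u ∗ v : G ∗ G ∗ ⟨x⟩ ∗ ⟨y⟩ → H` has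
remnant, then `u` and `v` are in different doubly-twisted conjugacy classes. -/
theorem classes_distinct_of_quad_hasRemnant {n : ℕ} {β : Type*} [DecidableEq β]
    (φ ψ : FreeGroup (Fin n) →* FreeGroup β) (u v : FreeGroup β) (huv : u ≠ v)
    (h : HasRemnant (quadHom φ ψ u v)) :
    ¬ ∃ g : FreeGroup (Fin n), v = φ g * u * (ψ g)⁻¹ :=
  classes_distinct_of_quad_hasRemnant_general φ ψ u v h
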